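/- For a graded Poisson structure W on T*M, with Ψ defined by {m(X), m(Y)}_W = s(Ψ(X,Y)), the operator Ψ satisfies Ψ(X, fY) = f Ψ(X,Y) − (1/2)(D_{df}X ⊗ Y + Y ⊗ D_{df}X) for all vector fields X,Y and functions f on M. -/

import Mathlib

open scoped BigOperators
noncomputable section

/-- The model of the base manifold `M`: global coordinates `(x^i)` on an `n`-dimensional chart. -/
abbrev Vec (n : ℕ) := Fin n → ℝ
/-- The model of the cotangent bundle `T*M`: points `(x, p)`. -/
abbrev Cot (n : ℕ) := Vec n × Vec n
/-- Index type for the `2n` coordinates `(x^i, p_i)` of `T*M`. -/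
abbrev Idx (n : ℕ) := Fin n ⊕ Fin n

/-- Smoothness. -/
def Sm {E F : Type*} [NormedAddCommGroup E] [NormedSpace ℝ E]
    [NormedAddCommGroup F] [NormedSpace ℝ F] (f : E → F) : Prop := ContDiff ℝ (⊤ : ℕ∞) f

/-- Partial derivative `∂f/∂x^i` on the base. -/
def pd {n : ℕ} (i : Fin n) (f : Vec n → ℝ) (x : Vec n) : ℝ := fderiv ℝ f x (Pi.single i 1)

/-- Coordinate direction in `T*M`. -/
def dirOf {n : ℕ} : Idx n → Cot n
  | Sum.inl i => (Pi.single i 1, 0)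
  | Sum.inr i => (0, Pi.single i 1)

/-- Partial derivative on `T*M` in the direction of the `a`-th coordinate. -/
def DT {n : ℕ} (a : Idx n) (F : Cot n → ℝ) (z : Cot n) : ℝ := fderiv ℝ F z (dirOf a)
/-- `∂/∂x^i` on `T*M`. -/
def Dxx {n : ℕ} (i : Fin n) : (Cot n → ℝ) → Cot n → ℝ := DT (Sum.inl i)
/-- `∂/∂p_i` on `T*M`. -/
def Dpp {n : ℕ} (i : Fin n) : (Cot n → ℝ) → Cot n → ℝ := DT (Sum.inr i)

/-- A bivector field on `T*M`, given by its component matrix `W^{AB}`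
(the bivector is `(1/2) W^{AB} ∂_A ∧ ∂_B`). -/
abbrev Biv (n : ℕ) := Cot n → Idx n → Idx n → ℝ

/-- The bracket of functions on `T*M` defined by a bivector field `W`. -/
def bkt {n : ℕ} (W : Biv n) (F G : Cot n → ℝ) (z : Cot n) : ℝ :=
  ∑ a : Idx n, ∑ b : Idx n, W z a b * DT a F z * DT b G z

/-- The bracket of functions on `M` defined by a bivector field `w` on `M`
(components `w^{ij}`, the bivector being `(1/2) w^{ij} ∂_i ∧ ∂_j`). -/
def bktM {n : ℕ} (w : Vec n → Fin n → Fin n → ℝ) (f g : Vec n → ℝ) (x : Vec n) : ℝ :=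
  ∑ i, ∑ j, w x i j * pd i f x * pd j g x

def SkewT {n : ℕ} (W : Biv n) : Prop := ∀ z a b, W z a b = - W z b a
def SmoothT {n : ℕ} (W : Biv n) : Prop := ∀ a b, Sm fun z => W z a b
/-- The Jacobi identity for the bracket of `W`, i.e. `[W,W] = 0`. -/
def JacobiT {n : ℕ} (W : Biv n) : Prop :=
  ∀ F G H : Cot n → ℝ, Sm F → Sm G → Sm H → ∀ z,
    bkt W (bkt W F G) H z + bkt W (bkt W G H) F z + bkt W (bkt W H F) G z = 0

def SkewM {n : ℕ} (w : Vec n → Fin n → Fin n → ℝ) : Prop := ∀ x i j, w x i j = - w x j i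
def SmoothM {n : ℕ} (w : Vec n → Fin n → Fin n → ℝ) : Prop := ∀ i j, Sm fun x => w x i j
def JacobiM {n : ℕ} (w : Vec n → Fin n → Fin n → ℝ) : Prop :=
  ∀ f g h : Vec n → ℝ, Sm f → Sm g → Sm h → ∀ x,
    bktM w (bktM w f g) h x + bktM w (bktM w g h) f x + bktM w (bktM w h f) g x = 0

/-- A Poisson structure on `T*M`. -/
def PoissonT {n : ℕ} (W : Biv n) : Prop := SkewT W ∧ SmoothT W ∧ JacobiT W
/-- A Poisson structure on `M`. -/
def PoissonM {n : ℕ} (w : Vec n → Fin n → Fin n → ℝ) : Prop := SkewM w ∧ SmoothM w ∧ JacobiM w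

/-- `F : T*M → ℝ` is a fiberwise polynomial of degree `≤ k`. -/
def PolyDeg {n : ℕ} (k : ℕ) (F : Cot n → ℝ) : Prop :=
  ∃ P : Vec n → MvPolynomial (Fin n) ℝ, (∀ x, (P x).totalDegree ≤ k) ∧
    ∀ x p, F (x, p) = MvPolynomial.eval p (P x)

/-- `F : T*M → ℝ` is a fiberwise homogeneous polynomial of degree `k`. -/
def HomogPoly {n : ℕ} (k : ℕ) (F : Cot n → ℝ) : Prop :=
  ∃ P : Vec n → MvPolynomial (Fin n) ℝ, (∀ x, (P x).IsHomogeneous k) ∧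
    ∀ x p, F (x, p) = MvPolynomial.eval p (P x)

/-- Polynomially graded bivector field: brackets of fiberwise polynomials of degree `≤ h`
and `≤ k` are fiberwise polynomials of degree `≤ h + k`. -/
def PolyGraded {n : ℕ} (W : Biv n) : Prop :=
  ∀ (h k : ℕ) (F G : Cot n → ℝ), Sm F → Sm G → PolyDeg h F → PolyDeg k G →
    PolyDeg (h + k) (bkt W F G)

/-- Graded bivector field: brackets of fiberwise homogeneous polynomials of degrees `h`, `k`
are fiberwise homogeneous of degree `h + k`. -/
def HGraded {n : ℕ} (W : Biv n) : Prop :=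
  ∀ (h k : ℕ) (F G : Cot n → ℝ), Sm F → Sm G → HomogPoly h F → HomogPoly k G →
    HomogPoly (h + k) (bkt W F G)

/-- The momentum `m(X)` of a vector field `X` on `M`. -/
def mmt {n : ℕ} (X : Vec n → Vec n) (z : Cot n) : ℝ := ∑ i, z.2 i * X z.1 i

/-- The quadratic fiberwise polynomial `s(Q)` of a symmetric 2-contravariant tensor field. -/
def sQ {n : ℕ} (G : Vec n → Fin n → Fin n → ℝ) (z : Cot n) : ℝ :=
  ∑ i, ∑ j, G z.1 i j * z.2 i * z.2 j

/-- `W` is `π`-related to `w`: the projection `π : T*M → M` is a Poisson mapping. -/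
def PiRel {n : ℕ} (W : Biv n) (w : Vec n → Fin n → Fin n → ℝ) : Prop :=
  ∀ f g : Vec n → ℝ, Sm f → Sm g → ∀ z : Cot n,
    bkt W (fun y => f y.1) (fun y => g y.1) z = bktM w f g z.1

/-- Foliated function of the vertical foliation of `T*M`: constant on the fibers. -/
def FolV {n : ℕ} (F : Cot n → ℝ) : Prop := ∀ (x p p' : Vec n), F (x, p) = F (x, p')

/-- Transversal Poisson structure of the vertical foliation of `T*M`
(semi-Poisson structure): the bracket restricts to a Lie bracket on foliated functions. -/
def SemiPoissonT {n : ℕ} (W : Biv n) : Prop :=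
  (∀ F G, Sm F → Sm G → FolV F → FolV G → FolV (bkt W F G)) ∧
  (∀ F G H, Sm F → Sm G → Sm H → FolV F → FolV G → FolV H → ∀ z,
    bkt W (bkt W F G) H z + bkt W (bkt W G H) F z + bkt W (bkt W H F) G z = 0)

/-- The `w`-Hamiltonian vector field of `f` : `(X_f^w)^j = w^{ij} ∂_i f`. -/
def ham {n : ℕ} (w : Vec n → Fin n → Fin n → ℝ) (f : Vec n → ℝ) (x : Vec n) (j : Fin n) : ℝ :=
  ∑ i, w x i j * pd i f x

/-- Contravariant derivative of a vector field, with coefficients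
`D_{dx^i} ∂_j = -Γ^{ik}_j ∂_k`, applied in the direction `df`:
`(D_{df}X)^j = ∂_i f (w^{ib} ∂_b X^j - Γ^{ij}_k X^k)`. -/
def Dvec {n : ℕ} (w : Vec n → Fin n → Fin n → ℝ) (Γ : Vec n → Fin n → Fin n → Fin n → ℝ)
    (f : Vec n → ℝ) (X : Vec n → Vec n) (x : Vec n) (j : Fin n) : ℝ :=
  ∑ i, pd i f x *
    ((∑ b, w x i b * pd b (fun y => X y j) x) - ∑ k, Γ x i j k * X x k)

/-- The extension of the contravariant derivative `D_{df}` to symmetric 2-tensor fields. -/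
def Dten2 {n : ℕ} (w : Vec n → Fin n → Fin n → ℝ) (Γ : Vec n → Fin n → Fin n → Fin n → ℝ)
    (f : Vec n → ℝ) (G : Vec n → Fin n → Fin n → ℝ) (x : Vec n) (i j : Fin n) : ℝ :=
  (∑ a, ∑ b, w x a b * pd a f x * pd b (fun y => G y i j) x)
   - (∑ a, ∑ h, pd a f x * Γ x a i h * G x h j)
   - (∑ a, ∑ h, pd a f x * Γ x a j h * G x i h)

def SmoothVF {n : ℕ} (X : Vec n → Vec n) : Prop := ∀ i, Sm fun x => X x i
def SmoothGam {n : ℕ} (Γ : Vec n → Fin n → Fin n → Fin n → ℝ) : Prop :=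
  ∀ i j k, Sm fun x => Γ x i j k

lemma DT_mul {n : ℕ} (a : Idx n) (G H : Cot n → ℝ) (z : Cot n)
    (hG : DifferentiableAt ℝ G z) (hH : DifferentiableAt ℝ H z) :
    DT a (fun y => G y * H y) z = G z * DT a H z + H z * DT a G z := by
  simp [DT, fderiv_fun_mul hG hH]

lemma bkt_mul {n : ℕ} (W : Biv n) (F G H : Cot n → ℝ) (z : Cot n)
    (hG : DifferentiableAt ℝ G z) (hH : DifferentiableAt ℝ H z) :
    bkt W F (fun y => G y * H y) z = G z * bkt W F H z + H z * bkt W F G z := by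
  simp only [bkt, Finset.mul_sum, ← Finset.sum_add_distrib]
  refine Finset.sum_congr rfl fun a _ => ?_
  refine Finset.sum_congr rfl fun b _ => ?_
  rw [DT_mul b G H z hG hH]; ring

lemma mmt_smooth {n : ℕ} (X : Vec n → Vec n) (hX : SmoothVF X) : Sm (mmt X) := by
  unfold Sm mmt
  refine ContDiff.sum fun i _ => ContDiff.mul ?_ ((hX i).comp contDiff_fst)
  exact (ContinuousLinearMap.proj (R := ℝ) (φ := fun _ : Fin n => ℝ) i).contDiff.comp contDiff_snd

lemma polar {n : ℕ} (M : Fin n → Fin n → ℝ) (hsym : ∀ i j, M i j = M j i)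
    (h : ∀ p : Vec n, (∑ i, ∑ j, M i j * p i * p j) = 0) (i j : Fin n) : M i j = 0 := by
  have hd : ∀ k, M k k = 0 := by
    intro k
    have := h (Pi.single k 1)
    simpa [Pi.single_apply, mul_ite, ite_mul, Finset.sum_ite_eq'] using this
  by_cases hij : i = j
  · rw [hij]; exact hd j
  · have := h (Pi.single i 1 + Pi.single j 1)
    simp only [Pi.add_apply, Pi.single_apply, mul_add, add_mul, mul_ite, ite_mul,
      mul_one, mul_zero, zero_mul, one_mul, Finset.sum_add_distrib,
      Finset.sum_ite_eq', Finset.mem_univ, if_true] at this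
    rw [hd i, hd j, hsym j i] at this
    linarith

/-- for a graded Poisson structure `W` on `T*M`, the operator `Ψ` defined by
`{m(X), m(Y)}_W = s(Ψ(X,Y))` satisfies
`Ψ(X, fY) = f Ψ(X,Y) - (1/2)(D_{df}X ⊗ Y + Y ⊗ D_{df}X)`,
where `D` is the contravariant connection with `{m(X), f}_W = -m(D_{df}X)`. -/
theorem stmt4 {n : ℕ} (W : Biv n) (w : Vec n → Fin n → Fin n → ℝ)
    (hW : PoissonT W) (hgr : HGraded W) (hw : PoissonM w) (hrel : PiRel W w)
    (Dc : (Vec n → ℝ) → (Vec n → Vec n) → (Vec n → Vec n))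
    (hD : ∀ (X : Vec n → Vec n) (f : Vec n → ℝ), SmoothVF X → Sm f →
      ∀ z : Cot n, bkt W (mmt X) (fun y => f y.1) z = -(mmt (Dc f X) z))
    (Psi : (Vec n → Vec n) → (Vec n → Vec n) → Vec n → Fin n → Fin n → ℝ)
    (hPsiSym : ∀ X Y x i j, Psi X Y x i j = Psi X Y x j i)
    (hPsi : ∀ (X Y : Vec n → Vec n), SmoothVF X → SmoothVF Y →
      ∀ z : Cot n, bkt W (mmt X) (mmt Y) z = sQ (Psi X Y) z) :
    ∀ (X Y : Vec n → Vec n) (f : Vec n → ℝ), SmoothVF X → SmoothVF Y → Sm f →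
      ∀ x i j, Psi X (fun y l => f y * Y y l) x i j
        = f x * Psi X Y x i j - (1/2) * (Dc f X x i * Y x j + Y x i * Dc f X x j) := by
  intro X Y f hX hY hf x i j
  set fY : Vec n → Vec n := fun y l => f y * Y y l with hfYdef
  have hfY : SmoothVF fY := fun l => hf.mul (hY l)
  -- the "right-hand side" tensor
  set B : Vec n → Fin n → Fin n → ℝ := fun x' i' j' =>
    f x' * Psi X Y x' i' j' - (1/2) * (Dc f X x' i' * Y x' j' + Y x' i' * Dc f X x' j')
    with hBdef
  -- pointwise quadratic-form identity
  have key : ∀ p : Vec n, sQ (Psi X fY) (x, p) = sQ B (x, p) := by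
    intro p
    have h1 : bkt W (mmt X) (mmt fY) (x, p) = sQ (Psi X fY) (x, p) := hPsi X fY hX hfY _
    have hmm : mmt fY = fun z : Cot n => (fun y : Cot n => f y.1) z * mmt Y z := by
      funext z
      simp only [mmt, hfYdef, Finset.mul_sum]
      exact Finset.sum_congr rfl fun k _ => by ring
    have hGd : DifferentiableAt ℝ (fun y : Cot n => f y.1) (x, p) :=
      ((hf.comp contDiff_fst).differentiable (by simp)).differentiableAt
    have hHd : DifferentiableAt ℝ (mmt Y) (x, p) :=
      ((mmt_smooth Y hY).differentiable (by simp)).differentiableAt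
    have h2 : bkt W (mmt X) (mmt fY) (x, p)
        = f x * bkt W (mmt X) (mmt Y) (x, p)
          + mmt Y (x, p) * bkt W (mmt X) (fun y => f y.1) (x, p) := by
      rw [hmm, bkt_mul W (mmt X) (fun y : Cot n => f y.1) (mmt Y) (x, p) hGd hHd]
    have h3 : bkt W (mmt X) (fun y => f y.1) (x, p) = -(mmt (Dc f X) (x, p)) :=
      hD X f hX hf _
    have h4 : bkt W (mmt X) (mmt Y) (x, p) = sQ (Psi X Y) (x, p) := hPsi X Y hX hY _
    have hlhs : sQ (Psi X fY) (x, p)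
        = f x * sQ (Psi X Y) (x, p) - mmt Y (x, p) * mmt (Dc f X) (x, p) := by
      rw [← h1, h2, h3, h4]; ring
    have e1 : mmt Y (x, p) * mmt (Dc f X) (x, p)
        = ∑ i', ∑ j', Y x i' * Dc f X x j' * p i' * p j' := by
      simp only [mmt, Finset.sum_mul_sum]
      exact Finset.sum_congr rfl fun i' _ => Finset.sum_congr rfl fun j' _ => by ring
    have e2 : mmt Y (x, p) * mmt (Dc f X) (x, p)
        = ∑ i', ∑ j', Dc f X x i' * Y x j' * p i' * p j' := by
      rw [mul_comm]
      simp only [mmt, Finset.sum_mul_sum]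
      exact Finset.sum_congr rfl fun i' _ => Finset.sum_congr rfl fun j' _ => by ring
    have hrhs : sQ B (x, p)
        = f x * sQ (Psi X Y) (x, p) - mmt Y (x, p) * mmt (Dc f X) (x, p) := by
      calc sQ B (x, p)
          = ∑ i', ∑ j', (f x * (Psi X Y x i' j' * p i' * p j')
              - (1/2) * (Dc f X x i' * Y x j' * p i' * p j'
                + Y x i' * Dc f X x j' * p i' * p j')) := by
            simp only [sQ, hBdef]
            exact Finset.sum_congr rfl fun i' _ =>
              Finset.sum_congr rfl fun j' _ => by ring
        _ = f x * (∑ i', ∑ j', Psi X Y x i' j' * p i' * p j')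
              - (1/2) * ((∑ i', ∑ j', Dc f X x i' * Y x j' * p i' * p j')
                + (∑ i', ∑ j', Y x i' * Dc f X x j' * p i' * p j')) := by
            simp only [Finset.mul_sum, ← Finset.sum_add_distrib, ← Finset.sum_sub_distrib]
        _ = f x * sQ (Psi X Y) (x, p) - mmt Y (x, p) * mmt (Dc f X) (x, p) := by
            rw [← e2, ← e1]
            simp only [sQ]
            ring
    rw [hlhs, hrhs]
  -- polarization
  have hM : ∀ i' j', Psi X fY x i' j' - B x i' j' = 0 := by
    refine polar _ (fun i' j' => ?_) (fun p => ?_)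
    · simp only [hBdef, hPsiSym X fY x i' j', hPsiSym X Y x i' j']; ring
    · have := key p
      simp only [sQ] at this
      simp only [sub_mul, Finset.sum_sub_distrib]
      rw [this]; ring
  have := hM i j
  simp only [hBdef] at this
  linarith
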